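/- Let A_Γ be an irreducible Artin group with a visual splitting A_Γ = A_{Γ₁} *_{A_Ω} A_{Γ₂}, Ω = Γ₁ ∩ Γ₂. If H is a subgroup of A_Ω that is a parabolic subgroup of A_Γ and that is normal in both A_{Γ₁} and A_{Γ₂}, then H is the trivial subgroup. -/
import Mathlib


/-!
Common framework: Artin groups of labelled graphs.

A finite labelled graph `Γ` on vertex set `α` is encoded by a symmetric function
`M : α → α → ℕ`, where `M s t = 0` means `s` and `t` are not joined by an edge
(label `∞`), and `M s t = m ≥ 2` means `s, t` are joined by an edge labelled `m`.
-/

namespace ArtinPaper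

/-- The word `Π(s,t;m) = stst⋯` (`m` letters) in the free group. -/
def braidWord {α : Type*} (m : ℕ) (s t : α) : FreeGroup α :=
  ((List.range m).map (fun i => if i % 2 = 0 then FreeGroup.of s else FreeGroup.of t)).prod

/-- The Artin relations of the labelled graph `M`: `Π(s,t;m_{s,t}) = Π(t,s;m_{s,t})`
for every edge `{s,t}` (i.e. whenever `2 ≤ M s t`). -/
def artinRels {α : Type*} (M : α → α → ℕ) : Set (FreeGroup α) :=
  { r | ∃ s t : α, 2 ≤ M s t ∧ r = braidWord (M s t) s t * (braidWord (M s t) t s)⁻¹ }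

/-- The Artin group `A_Γ` of the labelled graph `M`. -/
abbrev ArtinGroup {α : Type*} (M : α → α → ℕ) : Type _ :=
  PresentedGroup (artinRels M)

/-- The image in `A_Γ` of the generator `s`. -/
def agen {α : Type*} (M : α → α → ℕ) (s : α) : ArtinGroup M :=
  PresentedGroup.of s

/-- The standard parabolic subgroup `A_T` of `A_Γ`, for `T ⊆ S`. -/
def standardParabolic {α : Type*} (M : α → α → ℕ) (T : Set α) :
    Subgroup (ArtinGroup M) :=
  Subgroup.closure (agen M '' T)

/-- The conjugate `g H g⁻¹` of a subgroup. -/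
def conjSub {G : Type*} [Group G] (g : G) (H : Subgroup G) : Subgroup G :=
  H.map (MulAut.conj g).toMonoidHom

/-- A parabolic subgroup of `A_Γ` is a conjugate `g A_T g⁻¹` of a standard parabolic. -/
def IsParabolic {α : Type*} (M : α → α → ℕ) (H : Subgroup (ArtinGroup M)) : Prop :=
  ∃ (g : ArtinGroup M) (T : Set α), H = conjSub g (standardParabolic M T)

/-- A subgroup `H ≤ G` is weakly malnormal if some conjugate intersects it in a finite set. -/
def WeaklyMalnormal {G : Type*} [Group G] (H : Subgroup G) : Prop :=
  ∃ g : G, (((H ⊓ conjSub g H : Subgroup G) : Set G)).Finite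

/-- `A_Γ` is reducible if `S` is partitioned into two nonempty parts joined entirely
by edges labelled `2`. -/
def IsReducible {α : Type*} (M : α → α → ℕ) : Prop :=
  ∃ S₁ S₂ : Set α, S₁.Nonempty ∧ S₂.Nonempty ∧ Disjoint S₁ S₂ ∧
    S₁ ∪ S₂ = Set.univ ∧ ∀ s ∈ S₁, ∀ t ∈ S₂, M s t = 2

/-- The labelled graph induced on a subset `T` of the vertices. -/
def restrict {α : Type*} (M : α → α → ℕ) (T : Set α) : T → T → ℕ :=
  fun s t => M s t

/-- An Artin group satisfies the Intersection Property if the intersection of any two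
of its parabolic subgroups is again a parabolic subgroup. -/
def SatisfiesIP {α : Type*} (M : α → α → ℕ) : Prop :=
  ∀ H K : Subgroup (ArtinGroup M),
    IsParabolic M H → IsParabolic M K → IsParabolic M (H ⊓ K)

/-- A visual splitting `A_Γ = A_{Γ₁} *_{A_Ω} A_{Γ₂}`: two proper subsets of vertices
covering `S` such that each edge has both endpoints in `S₁` or both in `S₂`
(here `Ω = S₁ ∩ S₂`). -/
def VisualSplitting {α : Type*} (M : α → α → ℕ) (S₁ S₂ : Set α) : Prop :=
  S₁ ≠ Set.univ ∧ S₂ ≠ Set.univ ∧ S₁ ∪ S₂ = Set.univ ∧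
    ∀ s t : α, 2 ≤ M s t → (s ∈ S₁ ∧ t ∈ S₁) ∨ (s ∈ S₂ ∧ t ∈ S₂)

/-- `S₁` spans a direct factor of `A_Γ`: `∅ ≠ S₁ ⊊ S` and every vertex of `S₁` is joined
to every vertex of `S ∖ S₁` by an edge labelled `2`. -/
def IsDirectFactorSet {α : Type*} (M : α → α → ℕ) (S₁ : Set α) : Prop :=
  S₁.Nonempty ∧ S₁ ≠ Set.univ ∧ ∀ s ∈ S₁, ∀ t ∉ S₁, M s t = 2

/-- The Weak Malnormality Conjecture for `A_Γ`: a proper standard parabolic subgroup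
is weakly malnormal iff it does not contain a standard parabolic subgroup that is a
direct factor of `A_Γ`. -/
def SatisfiesWMC {α : Type*} (M : α → α → ℕ) : Prop :=
  ∀ T : Set α, T ≠ Set.univ →
    (WeaklyMalnormal (standardParabolic M T) ↔
      ¬ ∃ S₁ : Set α, IsDirectFactorSet M S₁ ∧
        standardParabolic M S₁ ≤ standardParabolic M T)

/-- The relations of the Coxeter group `W_Γ`: the Artin relations together with `s² = 1`. -/
def coxeterRels {α : Type*} (M : α → α → ℕ) : Set (FreeGroup α) :=
  artinRels M ∪ { r | ∃ s : α, r = FreeGroup.of s * FreeGroup.of s }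

/-- The Coxeter group `W_Γ`, the quotient of `A_Γ` by the relations `s² = 1`. -/
abbrev CoxGroup {α : Type*} (M : α → α → ℕ) : Type _ :=
  PresentedGroup (coxeterRels M)

end ArtinPaper

namespace ArtinPaper
open Real

/-! ### Auxiliary material -/

section AltProdSec
variable {G : Type*} [Group G]

def altProd (m : ℕ) (x y : G) : G :=
  ((List.range m).map (fun i => if i % 2 = 0 then x else y)).prod

lemma altProd_succ (m : ℕ) (x y : G) :
    altProd (m+1) x y = altProd m x y * (if m % 2 = 0 then x else y) := by
  simp [altProd, List.range_succ]

lemma altProd_eq (m : ℕ) (x y : G) : altProd m x y = (x*y)^(m/2) * x^(m%2) := by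
  induction m with
  | zero => simp [altProd]
  | succ n ih =>
    rw [altProd_succ, ih]
    rcases Nat.even_or_odd n with ⟨j, hj⟩ | ⟨j, hj⟩
    · have h1 : n % 2 = 0 := by omega
      have h2 : (n+1) % 2 = 1 := by omega
      have h3 : (n+1)/2 = n/2 := by omega
      rw [h1, h2, h3]; simp
    · have h1 : n % 2 = 1 := by omega
      have h2 : (n+1) % 2 = 0 := by omega
      have h3 : (n+1)/2 = n/2 + 1 := by omega
      rw [h1, h2, h3]; simp [pow_succ, mul_assoc]

lemma altProd_comm (x y : G) (hx : x*x = 1) (hy : y*y = 1) (m : ℕ)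
    (hm : (x*y)^m = 1) : altProd m x y = altProd m y x := by
  have hyx : y*x = (x*y)⁻¹ := by
    rw [mul_inv_rev, inv_eq_of_mul_eq_one_right hx, inv_eq_of_mul_eq_one_right hy]
  rw [altProd_eq, altProd_eq]
  rcases Nat.even_or_odd m with ⟨j, hj⟩ | ⟨j, hj⟩
  · have h1 : m % 2 = 0 := by omega
    have h2 : m / 2 = j := by omega
    rw [h1, h2, hyx, inv_pow]
    have : (x*y)^j * (x*y)^j = 1 := by rw [← pow_add]; rw [show j+j = m by omega, hm]
    rw [inv_eq_of_mul_eq_one_right this]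
    simp
  · have h1 : m % 2 = 1 := by omega
    have h2 : m / 2 = j := by omega
    rw [h1, h2, hyx, inv_pow, pow_one, pow_one]
    have h2m : (x*y)^(2*j) = (x*y)⁻¹ := by
      have h' : (x*y)^(2*j) * (x*y) = 1 := by
        rw [← pow_succ, ← hj, hm]
      exact eq_inv_of_mul_eq_one_left h'
    have key : (x*y)^j * ((x*y)^j * x) = y := by
      have : (x*y)^j * ((x*y)^j * x) = (x*y)^(2*j) * x := by
        rw [← mul_assoc, ← pow_add, two_mul]
      rw [this, h2m, mul_inv_rev]
      rw [inv_eq_of_mul_eq_one_right hx, inv_eq_of_mul_eq_one_right hy, mul_assoc, hx, mul_one]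
    exact eq_inv_mul_iff_mul_eq.2 key
end AltProdSec


lemma lift_braidWord {α : Type*} {G : Type*} [Group G] (φ : α → G) (m : ℕ) (s t : α) :
    FreeGroup.lift φ (braidWord m s t) = altProd m (φ s) (φ t) := by
  unfold braidWord altProd
  rw [map_list_prod, List.map_map]
  refine congrArg _ (List.map_congr_left fun i _ => ?_)
  by_cases h : i % 2 = 0 <;> simp [h]

section LinAlg
variable {α : Type*} [Fintype α] [DecidableEq α]

noncomputable def bmat (M : α → α → ℕ) (u v : α) : ℝ :=
  if u = v then 1 else -Real.cos (Real.pi / M u v)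

noncomputable def Bf (M : α → α → ℕ) (u : α) : (α → ℝ) →ₗ[ℝ] ℝ where
  toFun x := ∑ v, bmat M u v * x v
  map_add' x y := by simp [mul_add, Finset.sum_add_distrib]
  map_smul' c x := by simp [Finset.mul_sum]; ring_nf; simp [mul_comm, mul_assoc, mul_left_comm]

lemma Bf_single (M : α → α → ℕ) (u w : α) : Bf M u (Pi.single w 1) = bmat M u w := by
  simp [Bf, Pi.single_apply]

noncomputable def sgm (M : α → α → ℕ) (u : α) : Module.End ℝ (α → ℝ) :=
  LinearMap.id - ((2:ℝ) • Bf M u).smulRight (Pi.single u 1)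

lemma sgm_apply (M : α → α → ℕ) (u : α) (x : α → ℝ) :
    sgm M u x = x - (2 * Bf M u x) • (Pi.single u 1 : α → ℝ) := by
  simp [sgm, smul_smul]

lemma bmat_self (M : α → α → ℕ) (u : α) : bmat M u u = 1 := by simp [bmat]

lemma sgm_sq (M : α → α → ℕ) (u : α) : sgm M u * sgm M u = 1 := by
  apply LinearMap.ext
  intro x
  have h1 : Bf M u (Pi.single u (1:ℝ)) = 1 := by rw [Bf_single, bmat_self]
  simp only [Module.End.mul_apply, sgm_apply, map_sub, map_smul, h1, Module.End.one_apply]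
  module

end LinAlg

noncomputable def pp (th : ℝ) (k : ℕ) : ℝ := Real.sin ((2*(k:ℝ)+1)*th)
noncomputable def qq (th : ℝ) (k : ℕ) : ℝ := Real.sin ((2*(k:ℝ))*th)
noncomputable def rr (th : ℝ) (k : ℕ) : ℝ := Real.sin ((2*(k:ℝ)-1)*th)

lemma trig1 (c f : ℝ) : 2 * Real.cos c * Real.sin f - Real.sin (f - c) = Real.sin (f + c) := by
  rw [Real.sin_sub, Real.sin_add]; ring

lemma pf1 (th : ℝ) (k : ℕ) : 2 * Real.cos th * qq th k - rr th k = pp th k := by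
  have h := trig1 th ((2*(k:ℝ))*th)
  rw [show (2*(k:ℝ))*th - th = (2*(k:ℝ)-1)*th by ring,
      show (2*(k:ℝ))*th + th = (2*(k:ℝ)+1)*th by ring] at h
  exact h

lemma pf2 (th : ℝ) (k : ℕ) : qq th (k+1) = 2 * Real.cos th * pp th k - qq th k := by
  have h := trig1 th ((2*(k:ℝ)+1)*th)
  rw [show (2*(k:ℝ)+1)*th - th = (2*(k:ℝ))*th by ring,
      show (2*(k:ℝ)+1)*th + th = (2*((k+1:ℕ):ℝ))*th by push_cast; ring] at h
  exact h.symm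

lemma pf3 (th : ℝ) (k : ℕ) : rr th (k+1) = pp th k := by
  unfold rr pp
  congr 1
  push_cast; ring

lemma pf4 (th : ℝ) (k : ℕ) : pp th (k+1) = 2 * Real.cos th * qq th (k+1) - pp th k := by
  have h := trig1 th ((2*((k+1:ℕ):ℝ))*th)
  rw [show (2*((k+1:ℕ):ℝ))*th - th = (2*(k:ℝ)+1)*th by push_cast; ring,
      show (2*((k+1:ℕ):ℝ))*th + th = (2*((k+1:ℕ):ℝ)+1)*th by ring] at h
  exact h.symm

section Braid
variable {α : Type*} [Fintype α] [DecidableEq α] (M : α → α → ℕ)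

lemma bmat_symm (hsym : ∀ u v, M u v = M v u) (u v : α) : bmat M u v = bmat M v u := by
  rcases eq_or_ne u v with h | h
  · rw [h]
  · simp [bmat, h, h.symm, hsym u v]

lemma sgm_fix (M : α → α → ℕ) (u : α) (x : α → ℝ) (h : Bf M u x = 0) : sgm M u x = x := by
  rw [sgm_apply, h]; simp

lemma braid_core (hsym : ∀ u v, M u v = M v u) (s t : α) (hst : s ≠ t) (hm : 2 ≤ M s t) :
    (sgm M s * sgm M t) ^ (M s t) = 1 := by
  set m : ℕ := M s t with hmdef
  set th : ℝ := Real.pi / m with hth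
  have hm1 : (1:ℝ) < (m:ℝ) := by exact_mod_cast (by omega : 1 < m)
  have hm0 : (m:ℝ) ≠ 0 := by positivity
  have hth_pos : 0 < th := by
    rw [hth]; positivity
  have hth_le : th ≤ Real.pi / 2 := by
    have h2m : (2:ℝ) ≤ (m:ℝ) := by exact_mod_cast (by omega : 2 ≤ m)
    rw [hth, div_le_div_iff₀ (by positivity) (by norm_num)]
    nlinarith [mul_le_mul_of_nonneg_left h2m Real.pi_pos.le]
  have hth_lt_pi : th < Real.pi := lt_of_le_of_lt hth_le (by linarith [Real.pi_pos])
  have hsin_pos : 0 < Real.sin th := Real.sin_pos_of_pos_of_lt_pi hth_pos hth_lt_pi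
  have hcos_lt : Real.cos th < 1 := by
    calc Real.cos th < Real.cos 0 := by
          apply Real.cos_lt_cos_of_nonneg_of_le_pi le_rfl hth_lt_pi.le hth_pos
    _ = 1 := Real.cos_zero
  have hcos_nonneg : 0 ≤ Real.cos th :=
    Real.cos_nonneg_of_mem_Icc ⟨by linarith, hth_le⟩
  set c : ℝ := Real.cos th with hc
  set es : α → ℝ := Pi.single s 1 with hes
  set et : α → ℝ := Pi.single t 1 with het
  have hBss : Bf M s es = 1 := by rw [hes, Bf_single, bmat_self]
  have hBtt : Bf M t et = 1 := by rw [het, Bf_single, bmat_self]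
  have hBst : Bf M s et = -c := by
    rw [het, Bf_single]; simp [bmat, hst, hc, hth, hmdef]
  have hBts : Bf M t es = -c := by
    rw [hes, Bf_single, bmat_symm M hsym t s]; simp [bmat, hst, hc, hth, hmdef]
  have hplane_t : ∀ a b : ℝ, sgm M t (a•es + b•et) = a•es + (2*c*a - b)•et := by
    intro a b
    rw [sgm_apply, map_add, map_smul, map_smul, hBts, hBtt]
    simp only [smul_eq_mul]
    module
  have hplane_s : ∀ a b : ℝ, sgm M s (a•es + b•et) = (2*c*b - a)•es + b•et := by
    intro a b
    rw [sgm_apply, map_add, map_smul, map_smul, hBss, hBst]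
    simp only [smul_eq_mul]
    module
  have hsin : ∀ (k : ℕ) (a b : ℝ),
      Real.sin th • (((sgm M s * sgm M t) ^ k) (a•es + b•et)) =
      (pp th k * a - qq th k * b)•es + (qq th k * a - rr th k * b)•et := by
    intro k
    induction k with
    | zero =>
      intro a b
      simp only [pow_zero, Module.End.one_apply, pp, qq, rr, Nat.cast_zero]
      rw [show (2*(0:ℝ)+1)*th = th by ring, show (2*(0:ℝ))*th = 0 by ring,
          show (2*(0:ℝ)-1)*th = -th by ring]
      simp [Real.sin_neg]
      module
    | succ k ih =>
      intro a b
      rw [pow_succ', Module.End.mul_apply, ← map_smul, ih a b]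
      rw [Module.End.mul_apply, hplane_t, hplane_s]
      rw [pf4 th k, pf2 th k, pf3 th k, hc]
      congr 1
      · congr 1
        linear_combination (-2*Real.cos th*b) * pf1 th k
      · congr 1
        linear_combination (-b) * pf1 th k
  have hfix : ∀ (k : ℕ) (y : α → ℝ), Bf M s y = 0 → Bf M t y = 0 →
      ((sgm M s * sgm M t) ^ k) y = y := by
    intro k y h1 h2
    induction k with
    | zero => simp
    | succ k ih =>
      rw [pow_succ, Module.End.mul_apply, Module.End.mul_apply,
        sgm_fix M t y h2, sgm_fix M s y h1, ih]
  have hmth : (m:ℝ) * th = Real.pi := by rw [hth]; field_simp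
  have hpm : pp th m = Real.sin th := by
    unfold pp
    rw [show (2*(m:ℝ)+1)*th = th + 2*Real.pi by linear_combination 2 * hmth]
    exact Real.sin_add_two_pi th
  have hqm : qq th m = 0 := by
    unfold qq
    rw [show (2*(m:ℝ))*th = 2*Real.pi by linear_combination 2 * hmth]
    simp [Real.sin_two_pi]
  have hrm : rr th m = -Real.sin th := by
    unfold rr
    rw [show (2*(m:ℝ)-1)*th = -th + 2*Real.pi by linear_combination 2 * hmth]
    rw [Real.sin_add_two_pi, Real.sin_neg]
  have hD : (1:ℝ) - c^2 ≠ 0 := by nlinarith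
  apply LinearMap.ext
  intro x
  set a : ℝ := (Bf M s x + c * Bf M t x)/(1 - c^2) with ha
  set b : ℝ := (c * Bf M s x + Bf M t x)/(1 - c^2) with hb
  set y : α → ℝ := x - a • es - b • et with hy
  have h1 : Bf M s y = 0 := by
    rw [hy]
    simp only [map_sub, map_smul, hBss, hBst, smul_eq_mul, ha, hb]
    field_simp
    ring
  have h2 : Bf M t y = 0 := by
    rw [hy]
    simp only [map_sub, map_smul, hBtt, hBts, smul_eq_mul, ha, hb]
    field_simp
    ring
  have hx : x = y + (a • es + b • et) := by rw [hy]; module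
  have hv : ((sgm M s * sgm M t) ^ m) (a • es + b • et) = a • es + b • et := by
    have h := hsin m a b
    rw [hpm, hqm, hrm] at h
    have hgoal : Real.sin th • (((sgm M s * sgm M t) ^ m) (a • es + b • et)) =
        Real.sin th • (a • es + b • et) := by
      rw [h]
      module
    exact smul_right_injective (α → ℝ) (ne_of_gt hsin_pos) hgoal
  conv_lhs => rw [hx]
  rw [map_add, hfix m y h1 h2, hv, Module.End.one_apply, ← hx]
end Braid


section Rep
variable {α : Type*} [Fintype α] [DecidableEq α] (M : α → α → ℕ)

noncomputable def sgmU (u : α) : (Module.End ℝ (α → ℝ))ˣ :=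
  ⟨sgm M u, sgm M u, sgm_sq M u, sgm_sq M u⟩

lemma arep_rels (hsym : ∀ u v, M u v = M v u) (hdiag : ∀ s, M s s = 0) :
    ∀ r ∈ artinRels M, FreeGroup.lift (sgmU M) r = 1 := by
  rintro r ⟨s, t, hm, rfl⟩
  have hst : s ≠ t := by
    intro h
    rw [h, hdiag] at hm
    omega
  rw [map_mul, map_inv, lift_braidWord, lift_braidWord]
  have hx : sgmU M s * sgmU M s = 1 := Units.ext (sgm_sq M s)
  have hy : sgmU M t * sgmU M t = 1 := Units.ext (sgm_sq M t)
  have hpow : (sgmU M s * sgmU M t) ^ (M s t) = 1 := by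
    apply Units.ext
    rw [Units.val_pow_eq_pow_val, Units.val_mul]
    exact braid_core M hsym s t hst hm
  rw [altProd_comm _ _ hx hy _ hpow, mul_inv_cancel]

noncomputable def arep (hsym : ∀ u v, M u v = M v u) (hdiag : ∀ s, M s s = 0) :
    ArtinGroup M →* (Module.End ℝ (α → ℝ))ˣ :=
  PresentedGroup.toGroup (arep_rels M hsym hdiag)

lemma arep_agen (hsym : ∀ u v, M u v = M v u) (hdiag : ∀ s, M s s = 0) (u : α) :
    arep M hsym hdiag (agen M u) = sgmU M u :=
  PresentedGroup.toGroup.of _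

def suppSub (U : Set α) : Submodule ℝ (α → ℝ) where
  carrier := {x | ∀ w, w ∉ U → x w = 0}
  zero_mem' := fun _ _ => rfl
  add_mem' := fun hx hy w hw => by simp [hx w hw, hy w hw]
  smul_mem' := fun c x hx w hw => by simp [hx w hw]

noncomputable def KU (U : Set α) : Subgroup ((Module.End ℝ (α → ℝ))ˣ) where
  carrier := {g | (∀ x, g.val x - x ∈ suppSub U) ∧ (∀ x, (g⁻¹).val x - x ∈ suppSub U)}
  one_mem' := by
    refine ⟨fun x => ?_, fun x => ?_⟩ <;>
      simpa using (suppSub U).zero_mem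
  mul_mem' := by
    rintro a b ⟨ha1, ha2⟩ ⟨hb1, hb2⟩
    constructor
    · intro x
      have h : (a*b).val x - x = (a.val (b.val x) - b.val x) + (b.val x - x) := by
        rw [Units.val_mul, Module.End.mul_apply]; abel
      rw [h]; exact add_mem (ha1 _) (hb1 _)
    · intro x
      have h : ((a*b)⁻¹).val x - x = ((b⁻¹).val ((a⁻¹).val x) - (a⁻¹).val x) + ((a⁻¹).val x - x) := by
        rw [mul_inv_rev, Units.val_mul, Module.End.mul_apply]; abel
      rw [h]; exact add_mem (hb2 _) (ha2 _)
  inv_mem' := by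
    rintro a ⟨ha1, ha2⟩
    refine ⟨ha2, fun x => ?_⟩
    rw [inv_inv]; exact ha1 x

lemma sgm_sub_mem (u : α) {U : Set α} (hu : u ∈ U) (x : α → ℝ) :
    sgm M u x - x ∈ suppSub U := by
  intro w hw
  have hwu : w ≠ u := fun h => hw (h ▸ hu)
  rw [sgm_apply]
  simp [Pi.single_eq_of_ne hwu]

lemma sgmU_mem_KU {u : α} {U : Set α} (hu : u ∈ U) : sgmU M u ∈ KU U :=
  ⟨fun x => sgm_sub_mem M u hu x, fun x => sgm_sub_mem M u hu x⟩

lemma arep_parab (hsym : ∀ u v, M u v = M v u) (hdiag : ∀ s, M s s = 0) {T : Set α}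
    {h : ArtinGroup M} (hh : h ∈ standardParabolic M T) :
    arep M hsym hdiag h ∈ KU T := by
  have hle : standardParabolic M T ≤ (KU T).comap (arep M hsym hdiag) := by
    apply (Subgroup.closure_le _).2
    rintro x ⟨u, hu, rfl⟩
    simp only [SetLike.mem_coe, Subgroup.mem_comap, arep_agen]
    exact sgmU_mem_KU M hu
  exact hle hh

lemma conj_eval (hsym : ∀ u v, M u v = M v u) {s t : α} (hst : s ≠ t) :
    (sgm M t) ((sgm M s) ((sgm M t) (Pi.single t 1))) =
      (1 - 4*(bmat M s t)^2) • (Pi.single t 1 : α → ℝ) +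
        (2*(bmat M s t)) • (Pi.single s 1 : α → ℝ) := by
  have hBtt : Bf M t (Pi.single t 1 : α → ℝ) = 1 := by rw [Bf_single, bmat_self]
  have hBst : Bf M s (Pi.single t 1 : α → ℝ) = bmat M s t := Bf_single M s t
  have hBts : Bf M t (Pi.single s 1 : α → ℝ) = bmat M s t := by
    rw [Bf_single, bmat_symm M hsym t s]
  have h1 : (sgm M t) (Pi.single t 1 : α → ℝ) = -Pi.single t 1 := by
    rw [sgm_apply, hBtt]; module
  have h2 : (sgm M s) (-(Pi.single t 1 : α → ℝ)) =
      -(Pi.single t 1 : α → ℝ) + (2*bmat M s t) • (Pi.single s 1 : α → ℝ) := by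
    rw [map_neg, sgm_apply, hBst]; module
  rw [h1, h2, sgm_apply, map_add, map_neg, map_smul, hBtt, hBts]
  simp only [smul_eq_mul]
  module

end Rep

section ConjLemmas
variable {G : Type*} [Group G]

lemma conjSub_mul (g h : G) (K : Subgroup G) :
    conjSub (g*h) K = conjSub g (conjSub h K) := by
  simp only [conjSub, Subgroup.map_map]
  congr 1
  ext x
  simp [mul_assoc]

lemma conjSub_one' (K : Subgroup G) : conjSub (1:G) K = K := by
  ext x
  simp [conjSub, Subgroup.mem_map]

end ConjLemmas

end ArtinPaper

namespace ArtinPaper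

/-- **Claim 1 in the proof of Theorem A.** Let `A_Γ` be an irreducible
Artin group with a visual splitting `A_{Γ₁} *_{A_Ω} A_{Γ₂}`, `Ω = S₁ ∩ S₂`. If `H ≤ A_Ω`
is a parabolic subgroup of `A_Γ` that is normal in both `A_{Γ₁}` and `A_{Γ₂}`, then `H`
is trivial. -/
theorem trivial_of_normal_in_both_vertex_groups {α : Type*} [Fintype α] (M : α → α → ℕ)
    (hsym : ∀ s t, M s t = M t s) (hdiag : ∀ s, M s s = 0)
    (hlab : ∀ s t, s ≠ t → M s t = 0 ∨ 2 ≤ M s t)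
    (hirr : ¬ IsReducible M)
    (S₁ S₂ : Set α) (hsplit : VisualSplitting M S₁ S₂)
    (H : Subgroup (ArtinGroup M))
    (hle : H ≤ standardParabolic M (S₁ ∩ S₂))
    (hpar : IsParabolic M H)
    (hn₁ : ∀ g ∈ standardParabolic M S₁, conjSub g H = H)
    (hn₂ : ∀ g ∈ standardParabolic M S₂, conjSub g H = H) :
    H = ⊥ := by
  classical
  obtain ⟨hS₁ne, hS₂ne, hcover, _hedge⟩ := hsplit
  set f := arep M hsym hdiag with hf
  -- H is normal in the whole Artin group
  have hnorm : ∀ g : ArtinGroup M, conjSub g H = H := by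
    intro g
    let N : Subgroup (ArtinGroup M) :=
      { carrier := {g | conjSub g H = H}
        one_mem' := conjSub_one' H
        mul_mem' := by
          intro a b ha hb
          show conjSub (a*b) H = H
          rw [conjSub_mul, hb, ha]
        inv_mem' := by
          intro a ha
          show conjSub a⁻¹ H = H
          conv_lhs => rw [← ha]
          rw [← conjSub_mul, inv_mul_cancel, conjSub_one'] }
    refine PresentedGroup.generated_by _ N (fun u => ?_) g
    have hu : u ∈ S₁ ∪ S₂ := hcover ▸ Set.mem_univ u
    rcases hu with hu | hu
    · exact hn₁ (agen M u) (Subgroup.subset_closure (Set.mem_image_of_mem _ hu))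
    · exact hn₂ (agen M u) (Subgroup.subset_closure (Set.mem_image_of_mem _ hu))
  -- H is a standard parabolic
  obtain ⟨g, T, hgT⟩ := hpar
  have hHT : H = standardParabolic M T := by
    have h1 : conjSub g⁻¹ H = H := hnorm g⁻¹
    have h2 : conjSub g⁻¹ H = standardParabolic M T := by
      rw [hgT, ← conjSub_mul, inv_mul_cancel, conjSub_one']
    exact (h1.symm.trans h2)
  rcases Set.eq_empty_or_nonempty T with hT | hTne
  · rw [hHT, hT]
    simp [standardParabolic]
  -- otherwise derive a contradiction with irreducibility
  exfalso
  apply hirr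
  obtain ⟨x, hx⟩ : ∃ x, x ∉ S₁ := by
    by_contra hc
    push_neg at hc
    exact hS₁ne (Set.eq_univ_of_forall hc)
  have hxT : x ∉ T := by
    intro hxT
    have hmemH : agen M x ∈ H := hHT ▸ Subgroup.subset_closure (Set.mem_image_of_mem _ hxT)
    have hKU := arep_parab M hsym hdiag (hle hmemH)
    have hval := hKU.1 (Pi.single x 1)
    have hx12 : x ∉ S₁ ∩ S₂ := fun h => hx h.1
    have h0 := hval x hx12
    have harep : f (agen M x) = sgmU M x := arep_agen M hsym hdiag x
    rw [harep] at h0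
    have hBxx : Bf M x (Pi.single x 1 : α → ℝ) = 1 := by rw [Bf_single, bmat_self]
    have h0' : ((sgm M x) (Pi.single x 1 : α → ℝ) - (Pi.single x 1 : α → ℝ)) x = 0 := h0
    rw [sgm_apply, hBxx] at h0'
    simp [Pi.single_eq_same] at h0'
  have hcross : ∀ s ∈ T, ∀ t, t ∉ T → M s t = 2 := by
    intro s hs t ht
    have hst : s ≠ t := fun h => ht (h ▸ hs)
    have hsH : agen M s ∈ H := hHT ▸ Subgroup.subset_closure (Set.mem_image_of_mem _ hs)
    have hmemH : agen M t * agen M s * (agen M t)⁻¹ ∈ H := by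
      have hmm : agen M t * agen M s * (agen M t)⁻¹ ∈ conjSub (agen M t) H := by
        refine Subgroup.mem_map.2 ⟨agen M s, hsH, ?_⟩
        rfl
      rwa [hnorm] at hmm
    have hKU := arep_parab M hsym hdiag (hHT ▸ hmemH)
    have hval := hKU.1 (Pi.single t 1)
    have h0 := hval t ht
    have hfval : (f (agen M t * agen M s * (agen M t)⁻¹)).val (Pi.single t 1)
        = (sgm M t) ((sgm M s) ((sgm M t) (Pi.single t 1))) := by
      rw [map_mul, map_mul, map_inv, arep_agen, arep_agen]
      rfl
    rw [hfval, conj_eval M hsym hst] at h0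
    have hts : t ≠ s := hst.symm
    have hd : bmat M s t = 0 := by
      simpa [Pi.single_eq_same, Pi.single_eq_of_ne hts] using h0
    rcases hlab s t hst with hm0 | hm2
    · exfalso
      rw [bmat] at hd
      simp only [if_neg hst, hm0] at hd
      norm_num at hd
    · by_contra hne2
      have hm3 : 3 ≤ M s t := by omega
      have hmr : (3:ℝ) ≤ (M s t : ℝ) := by exact_mod_cast hm3
      have hcpos : 0 < Real.cos (Real.pi / (M s t)) := by
        apply Real.cos_pos_of_mem_Ioo
        constructor
        · have : 0 < Real.pi / (M s t) := by positivity
          linarith [Real.pi_pos]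
        · rw [div_lt_div_iff₀ (by linarith) (by norm_num)]
          nlinarith [Real.pi_pos]
      rw [bmat, if_neg hst] at hd
      linarith
  exact ⟨T, Tᶜ, hTne, ⟨x, hxT⟩, disjoint_compl_right, Set.union_compl_self T,
    fun s hs t ht => hcross s hs t ht⟩

end ArtinPaper
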